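/- arXiv:1204.5551 — 8 statements merged into one kernel-verified Lean document; each statement's English description precedes it below -/
import Mathlib

section
/- For a positive real random variable V with CDF F, the supremum over prices p > 0 of p·P(V > p) is at least (1/e)·exp(E[log V]). -/
/-!
If every posted price `p > 0` earns at most `u`, then `P(V > p) ≤ u / p`, so `X = log (V / u)`
has the exponential tail `P(X > t) ≤ e^{-t}`. By the layer-cake formula
`E[X] ≤ E[X⁺] = ∫₀^∞ P(X > t) dt ≤ 1`, i.e. `G[V] ≤ e·u`.
-/

open MeasureTheory Real Set

section

variable {Ω : Type*} [MeasurableSpace Ω] {μ : Measure Ω}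

theorem integral_le_one_of_measure_lt_le_exp_neg {X : Ω → ℝ} (hX : Integrable X μ)
    (htail : ∀ t > 0, μ {ω | t < X ω} ≤ ENNReal.ofReal (exp (-t))) :
    ∫ ω, X ω ∂μ ≤ 1 :=
  calc ∫ ω, X ω ∂μ ≤ ∫ ω, max (X ω) 0 ∂μ :=
        integral_mono hX hX.pos_part fun ω => le_max_left _ _
    _ = ∫ t in Ioi 0, μ.real {ω | t < max (X ω) 0} :=
        hX.pos_part.integral_eq_integral_meas_lt (.of_forall fun ω => le_max_right _ _)
    _ ≤ ∫ t in Ioi 0, exp (-t) := by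
        refine integral_mono_of_nonneg (.of_forall fun _ => measureReal_nonneg)
          (integrableOn_exp_neg_Ioi 0) ((ae_restrict_iff' measurableSet_Ioi).mpr
            (.of_forall fun t (ht : 0 < t) => ?_))
        have hpos_part : {ω | t < max (X ω) 0} = {ω | t < X ω} := by
          ext ω
          simp [ht.not_gt]
        simp only [hpos_part]
        exact ENNReal.toReal_le_of_le_ofReal (exp_pos _).le (htail t ht)
    _ = 1 := integral_exp_neg_Ioi_zero

theorem measure_lt_le_ofReal_div_of_mul_le {V : Ω → ℝ} {u p : ℝ} (hp : 0 < p)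
    (hrev : ENNReal.ofReal p * μ {ω | p < V ω} ≤ ENNReal.ofReal u) :
    μ {ω | p < V ω} ≤ ENNReal.ofReal (u / p) := by
  rw [ENNReal.ofReal_div_of_pos hp, ENNReal.le_div_iff_mul_le (.inl (by simpa using hp))
    (.inl ENNReal.ofReal_ne_top), mul_comm]
  exact hrev

theorem integral_log_le_log_add_one_of_revenue_le [IsProbabilityMeasure μ] {V : Ω → ℝ}
    (hpos : ∀ᵐ ω ∂μ, 0 < V ω) (hint : Integrable (fun ω => log (V ω)) μ)
    {u : ℝ} (hu : 0 < u)
    (hrev : ∀ p > 0, ENNReal.ofReal p * μ {ω | p < V ω} ≤ ENNReal.ofReal u) :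
    ∫ ω, log (V ω) ∂μ ≤ log u + 1 := by
  have htail : ∀ t > 0, μ {ω | t < log (V ω) - log u} ≤ ENNReal.ofReal (exp (-t)) := by
    intro t _
    have hprice : 0 < exp (t + log u) := exp_pos _
    calc μ {ω | t < log (V ω) - log u} ≤ μ {ω | exp (t + log u) < V ω} := by
          refine measure_mono_ae (hpos.mono fun ω hω (hlt : t < log (V ω) - log u) => ?_)
          exact (lt_log_iff_exp_lt hω).mp (lt_sub_iff_add_lt.mp hlt)
      _ ≤ ENNReal.ofReal (u / exp (t + log u)) :=
          measure_lt_le_ofReal_div_of_mul_le hprice (hrev _ hprice)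
      _ = ENNReal.ofReal (exp (-t)) := by
          rw [exp_add, exp_log hu, exp_neg]
          field_simp
  have hshifted := integral_le_one_of_measure_lt_le_exp_neg
    (X := fun ω => log (V ω) - log u) (hint.sub (integrable_const _)) htail
  rw [integral_sub hint (integrable_const _), integral_const, probReal_univ, one_smul] at hshifted
  linarith

end

theorem stmt_0_general {Ω : Type*} [MeasurableSpace Ω] (μ : Measure Ω) [IsProbabilityMeasure μ]
    (V : Ω → ℝ) (hpos : ∀ᵐ ω ∂μ, 0 < V ω)
    (hint : Integrable (fun ω => Real.log (V ω)) μ) :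
    ENNReal.ofReal ((1 / Real.exp 1) * Real.exp (∫ ω, Real.log (V ω) ∂μ)) ≤
      ⨆ p : ℝ, ⨆ _ : 0 < p, ENNReal.ofReal p * μ {ω | p < V ω} := by
  by_contra! hlt
  obtain ⟨u, -, hSu, hu⟩ := ENNReal.lt_iff_exists_real_btwn.mp hlt
  have hu_pos : 0 < u := ENNReal.ofReal_pos.mp (zero_le.trans_lt hSu)
  have hrev : ∀ p > 0, ENNReal.ofReal p * μ {ω | p < V ω} ≤ ENNReal.ofReal u :=
    fun p hp => (le_iSup₂_of_le p hp le_rfl).trans hSu.le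
  have hlog := integral_log_le_log_add_one_of_revenue_le hpos hint hu_pos hrev
  have hexp : 1 / exp 1 * exp (∫ ω, log (V ω) ∂μ) ≤ u := by
    rw [← exp_log hu_pos, one_div, ← exp_neg, ← exp_add]
    exact exp_le_exp.mpr (by linarith)
  rw [ENNReal.ofReal_lt_ofReal_iff_of_nonneg hu_pos.le] at hu
  linarith

/-- The optimal seller revenue `sup_{p>0} p·P(V > p)` is at least
`(1/e)·exp(E[log V])`, the geometric expectation of `V` divided by `e`. -/
theorem stmt_0 {Ω : Type*} [MeasurableSpace Ω] (μ : Measure Ω) [IsProbabilityMeasure μ]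
    (V : Ω → ℝ) (hV : Measurable V) (hpos : ∀ᵐ ω ∂μ, 0 < V ω)
    (hint : Integrable (fun ω => Real.log (V ω)) μ) :
    ENNReal.ofReal ((1 / Real.exp 1) * Real.exp (∫ ω, Real.log (V ω) ∂μ)) ≤
      ⨆ p : ℝ, ⨆ _ : 0 < p, ENNReal.ofReal p * μ {ω | p < V ω} :=
  stmt_0_general μ V hpos hint
end

section
/- If V has the equal revenue distribution with parameter c > 0, then u(V) := sup_{p>0} p·P(V > p) = c, and hence u(V) = (1/e)·exp(E[log V]); i.e., the lower bound u(V) ≥ (1/e)·G[V] is achieved with equality. -/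
/-!
The tail `P(V > p) = c / p` makes `p · P(V > p)` equal to `c` for every `p > c`, and equal to
`p` for `p ≤ c`, so the supremum is `c`. On the other side `log (V / c)` is a standard exponential variable,
since `P(log (V / c) > t) = c / (c eᵗ) = e⁻ᵗ`; hence `E[log V] = 1 + log c` and
`exp (E[log V]) / e = c`.
-/

open MeasureTheory Set

lemma integrable_and_integral_eq_one_of_exp_tail {α : Type*} [MeasurableSpace α] {μ : Measure α}
    {f : α → ℝ} (hf : 0 ≤ᵐ[μ] f) (hfm : AEMeasurable f μ)
    (htail : ∀ t > 0, μ {a | t < f a} = ENNReal.ofReal (Real.exp (-t))) :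
    Integrable f μ ∧ ∫ a, f a ∂μ = 1 := by
  have hlint : ∫⁻ a, ENNReal.ofReal (f a) ∂μ = 1 := by
    have htail_ae : ∀ᵐ t ∂volume.restrict (Ioi (0 : ℝ)),
        μ {a | t < f a} = ENNReal.ofReal (Real.exp (-t)) := by
      filter_upwards [ae_restrict_mem measurableSet_Ioi] with t ht using htail t ht
    rw [lintegral_eq_lintegral_meas_lt μ hf hfm, lintegral_congr_ae htail_ae,
      ← ofReal_integral_eq_lintegral_ofReal (integrableOn_exp_neg_Ioi 0)
        (.of_forall fun t => (Real.exp_pos _).le),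
      integral_exp_neg_Ioi_zero, ENNReal.ofReal_one]
  refine ⟨(lintegral_ofReal_ne_top_iff_integrable hfm.aestronglyMeasurable hf).mp
    (by simp [hlint]), ?_⟩
  rw [integral_eq_lintegral_of_nonneg_ae hf hfm.aestronglyMeasurable, hlint, ENNReal.toReal_one]

lemma lt_log_sub_log_iff {c v t : ℝ} (hc : 0 < c) (hv : 0 < v) :
    t < Real.log v - Real.log c ↔ c * Real.exp t < v := by
  rw [lt_sub_iff_add_lt, Real.lt_log_iff_exp_lt hv, Real.exp_add, Real.exp_log hc, mul_comm]

section EqualRevenue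

variable {Ω : Type*} [MeasurableSpace Ω] {μ : Measure Ω} [IsProbabilityMeasure μ]
  {V : Ω → ℝ} {c : ℝ}

lemma measure_le_eq_zero_of_le (hF1 : ∀ p ≤ c, (μ {ω | V ω ≤ p}).toReal = 0) {p : ℝ}
    (hp : p ≤ c) : μ {ω | V ω ≤ p} = 0 :=
  ((ENNReal.toReal_eq_zero_iff _).mp (hF1 p hp)).resolve_right (measure_ne_top μ _)

lemma measureReal_lt_eq_one_sub (hV : Measurable V) (p : ℝ) :
    μ.real {ω | p < V ω} = 1 - (μ {ω | V ω ≤ p}).toReal := by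
  have hcompl : {ω | p < V ω} = {ω | V ω ≤ p}ᶜ := by ext; simp
  rw [hcompl, probReal_compl_eq_one_sub (measurableSet_le hV measurable_const), measureReal_def]

lemma measure_lt_eq_one_of_le (hV : Measurable V)
    (hF1 : ∀ p ≤ c, (μ {ω | V ω ≤ p}).toReal = 0) {p : ℝ} (hp : p ≤ c) :
    μ {ω | p < V ω} = 1 := by
  rw [← ofReal_measureReal, measureReal_lt_eq_one_sub hV, hF1 p hp, sub_zero, ENNReal.ofReal_one]

lemma measure_lt_eq_div_of_lt (hV : Measurable V)
    (hF2 : ∀ p > c, (μ {ω | V ω ≤ p}).toReal = 1 - c / p) {p : ℝ} (hp : c < p) :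
    μ {ω | p < V ω} = ENNReal.ofReal (c / p) := by
  rw [← ofReal_measureReal, measureReal_lt_eq_one_sub hV, hF2 p hp, sub_sub_cancel]

lemma ae_lt_of_measure_le_eq_zero (hF1 : ∀ p ≤ c, (μ {ω | V ω ≤ p}).toReal = 0) :
    ∀ᵐ ω ∂μ, c < V ω := by
  filter_upwards [measure_eq_zero_iff_ae_notMem.mp (measure_le_eq_zero_of_le hF1 le_rfl)]
    with ω hω
  simpa using hω

lemma iSup_ofReal_mul_measure_lt_eq (hV : Measurable V) (hc : 0 < c)
    (hF1 : ∀ p ≤ c, (μ {ω | V ω ≤ p}).toReal = 0)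
    (hF2 : ∀ p > c, (μ {ω | V ω ≤ p}).toReal = 1 - c / p) :
    (⨆ p : ℝ, ⨆ _ : 0 < p, ENNReal.ofReal p * μ {ω | p < V ω}) = ENNReal.ofReal c := by
  refine le_antisymm (iSup₂_le fun p hp => ?_) ?_
  · rcases le_or_gt p c with hpc | hcp
    · rw [measure_lt_eq_one_of_le hV hF1 hpc, mul_one]
      exact ENNReal.ofReal_le_ofReal hpc
    · rw [measure_lt_eq_div_of_lt hV hF2 hcp, ← ENNReal.ofReal_mul hp.le,
        mul_div_cancel₀ c hp.ne']
  · calc ENNReal.ofReal c = ENNReal.ofReal c * μ {ω | c < V ω} := by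
          rw [measure_lt_eq_one_of_le hV hF1 le_rfl, mul_one]
      _ ≤ _ := le_iSup₂ (f := fun (p : ℝ) (_ : 0 < p) => ENNReal.ofReal p * μ {ω | p < V ω}) c hc

lemma measure_lt_log_sub_log_eq (hV : Measurable V) (hc : 0 < c)
    (hF1 : ∀ p ≤ c, (μ {ω | V ω ≤ p}).toReal = 0)
    (hF2 : ∀ p > c, (μ {ω | V ω ≤ p}).toReal = 1 - c / p) {t : ℝ} (ht : 0 < t) :
    μ {ω | t < Real.log (V ω) - Real.log c} = ENNReal.ofReal (Real.exp (-t)) := by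
  have hset : μ {ω | t < Real.log (V ω) - Real.log c} = μ {ω | c * Real.exp t < V ω} := by
    refine measure_congr ?_
    filter_upwards [ae_lt_of_measure_le_eq_zero hF1] with ω hω
    exact propext (lt_log_sub_log_iff hc (hc.trans hω))
  have hlt : c < c * Real.exp t := lt_mul_of_one_lt_right hc (Real.one_lt_exp_iff.mpr ht)
  rw [hset, measure_lt_eq_div_of_lt hV hF2 hlt, div_mul_cancel_left₀ hc.ne', Real.exp_neg]

lemma integral_log_eq (hV : Measurable V) (hc : 0 < c)
    (hF1 : ∀ p ≤ c, (μ {ω | V ω ≤ p}).toReal = 0)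
    (hF2 : ∀ p > c, (μ {ω | V ω ≤ p}).toReal = 1 - c / p) :
    ∫ ω, Real.log (V ω) ∂μ = 1 + Real.log c := by
  have hnonneg : 0 ≤ᵐ[μ] fun ω => Real.log (V ω) - Real.log c := by
    filter_upwards [ae_lt_of_measure_le_eq_zero hF1] with ω hω
    exact sub_nonneg.mpr (Real.log_le_log hc hω.le)
  obtain ⟨hint, hone⟩ := integrable_and_integral_eq_one_of_exp_tail hnonneg
    ((Real.measurable_log.comp hV).sub measurable_const).aemeasurable
    (fun t ht => measure_lt_log_sub_log_eq hV hc hF1 hF2 ht)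
  calc ∫ ω, Real.log (V ω) ∂μ = ∫ ω, (Real.log (V ω) - Real.log c) + Real.log c ∂μ := by
        simp only [sub_add_cancel]
    _ = 1 + Real.log c := by
        rw [integral_add hint (integrable_const _), hone, integral_const]
        simp

end EqualRevenue

/-- If `V` has the equal revenue distribution with parameter `c > 0`, then
`u(V) = sup_{p>0} p·P(V > p) = c`, and hence `u(V) = (1/e)·exp(E[log V])`:
the lower bound `u(V) ≥ (1/e)·G[V]` is achieved with equality. -/
theorem stmt_3 {Ω : Type*} [MeasurableSpace Ω] (μ : Measure Ω) [IsProbabilityMeasure μ]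
    (V : Ω → ℝ) (hV : Measurable V) (c : ℝ) (hc : 0 < c)
    (hF1 : ∀ p ≤ c, (μ {ω | V ω ≤ p}).toReal = 0)
    (hF2 : ∀ p > c, (μ {ω | V ω ≤ p}).toReal = 1 - c / p) :
    (⨆ p : ℝ, ⨆ _ : 0 < p, ENNReal.ofReal p * μ {ω | p < V ω}) = ENNReal.ofReal c ∧
    (⨆ p : ℝ, ⨆ _ : 0 < p, ENNReal.ofReal p * μ {ω | p < V ω}) =
      ENNReal.ofReal ((1 / Real.exp 1) * Real.exp (∫ ω, Real.log (V ω) ∂μ)) := by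
  have hsup := iSup_ofReal_mul_measure_lt_eq hV hc hF1 hF2
  refine ⟨hsup, ?_⟩
  rw [hsup, integral_log_eq hV hc hF1 hF2, Real.exp_add, Real.exp_log hc, one_div,
    inv_mul_cancel_left₀ (Real.exp_pos 1).ne']
end

section
/- Let V be a positive random variable with continuous CDF F. If the expected seller revenue equals (1/e)·exp(E[log V]) (with E[log V] finite), then V has the equal revenue distribution Φ_c with c = u(V). -/
/-!
Let `c = u(V)`. Revenue at price `t` is at most `c`, so `P(V > t) ≤ c / t`. By the
layer-cake formula, `E[(log (V / c))⁺] = ∫_c^∞ P(V > t) dt / t ≤ ∫_c^∞ c / t² dt = 1`, while the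
hypothesis says `E[log (V / c)] = 1`. So the bound is attained: `P(V > t) = c / t` for almost
every `t > c`, hence for every `t ≥ c` by continuity of `F`; in particular `F c = 0`, and `F`
vanishes on `(-∞, c]` by monotonicity.
-/

open MeasureTheory Set Real
open scoped ENNReal

lemma Ioi_inter_Ioc_zero_of_nonneg {c x : ℝ} (hc : 0 ≤ c) : Ioi c ∩ Ioc 0 x = Ioc c x := by
  rw [inter_comm, Ioc_inter_Ioi, sup_eq_right.2 hc]

lemma integrableOn_Ioc_indicator_Ioi_inv {c x : ℝ} (hc : 0 < c) :
    IntegrableOn ((Ioi c).indicator fun t : ℝ => t⁻¹) (Ioc 0 x) := by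
  rw [integrableOn_indicator_iff measurableSet_Ioi, Ioi_inter_Ioc_zero_of_nonneg hc.le]
  exact (continuousOn_inv₀.mono fun t ht => (hc.trans_le ht.1).ne').integrableOn_Icc.mono_set
    Ioc_subset_Icc_self

lemma intervalIntegral_indicator_Ioi_inv {c x : ℝ} (hc : 0 < c) (hx : 0 ≤ x) :
    ∫ t in 0..x, (Ioi c).indicator (fun t => t⁻¹) t = max (log (x / c)) 0 := by
  rw [intervalIntegral.integral_of_le hx, integral_indicator measurableSet_Ioi,
    Measure.restrict_restrict measurableSet_Ioi, Ioi_inter_Ioc_zero_of_nonneg hc.le]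
  rcases le_or_gt x c with hxc | hcx
  · rw [Ioc_eq_empty hxc.not_gt, Measure.restrict_empty, integral_zero_measure,
      max_eq_right (log_nonpos (by positivity) ((div_le_one hc).2 hxc))]
  · rw [← intervalIntegral.integral_of_le hcx.le, integral_inv_of_pos hc (hc.trans hcx),
      max_eq_left (log_nonneg ((one_le_div hc).2 hcx.le))]

theorem lintegral_ofReal_log_div_eq {α : Type*} [MeasurableSpace α] (μ : Measure α)
    {f : α → ℝ} (hf_nn : 0 ≤ᵐ[μ] f) (hf : AEMeasurable f μ) {c : ℝ} (hc : 0 < c) :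
    ∫⁻ a, ENNReal.ofReal (log (f a / c)) ∂μ =
      ∫⁻ t in Ioi c, μ {a | t < f a} * ENNReal.ofReal t⁻¹ := by
  have hlayer := lintegral_comp_eq_lintegral_meas_lt_mul μ hf_nn hf
    (g := (Ioi c).indicator fun t => t⁻¹)
    (fun x hx => (intervalIntegrable_iff_integrableOn_Ioc_of_le hx.le).2
      (integrableOn_Ioc_indicator_Ioi_inv hc))
    (.of_forall <| indicator_nonneg fun t (ht : c < t) => inv_nonneg.2 (hc.trans ht).le)
  calc ∫⁻ a, ENNReal.ofReal (log (f a / c)) ∂μ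
      = ∫⁻ a, ENNReal.ofReal (∫ t in 0..f a, (Ioi c).indicator (fun t => t⁻¹) t) ∂μ := by
        refine lintegral_congr_ae (hf_nn.mono fun a ha => ?_)
        simp [intervalIntegral_indicator_Ioi_inv hc ha]
    _ = ∫⁻ t in Ioi 0,
          (Ioi c).indicator (fun t => μ {a | t < f a} * ENNReal.ofReal t⁻¹) t := by
        rw [hlayer]
        congr with t
        by_cases ht : t ∈ Ioi c <;> simp [ht]
    _ = ∫⁻ t in Ioi c, μ {a | t < f a} * ENNReal.ofReal t⁻¹ := by
        rw [lintegral_indicator measurableSet_Ioi, Measure.restrict_restrict measurableSet_Ioi,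
          Ioi_inter_Ioi, sup_eq_left.2 hc.le]

lemma lintegral_Ioi_ofReal_div_mul_inv {c : ℝ} (hc : 0 < c) :
    ∫⁻ t in Ioi c, ENNReal.ofReal (c / t) * ENNReal.ofReal t⁻¹ = 1 := by
  have hrpow : ∀ t ∈ Ioi c,
      ENNReal.ofReal (c / t) * ENNReal.ofReal t⁻¹ = ENNReal.ofReal (c * t ^ (-2 : ℝ)) := by
    intro t ht
    have ht0 : 0 < t := hc.trans ht
    rw [← ENNReal.ofReal_mul (by positivity), rpow_neg ht0.le, Real.rpow_two]
    ring_nf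
  rw [setLIntegral_congr_fun measurableSet_Ioi hrpow, ← ofReal_integral_eq_lintegral_ofReal,
    integral_const_mul, integral_Ioi_rpow_of_lt (by norm_num) hc]
  · norm_num [rpow_neg_one, hc.ne']
  · exact (integrableOn_Ioi_rpow_of_lt (by norm_num) hc).const_mul c
  · filter_upwards [ae_restrict_mem measurableSet_Ioi] with t (ht : c < t)
    have := hc.trans ht
    positivity

lemma ofReal_integral_le_lintegral_ofReal {α : Type*} [MeasurableSpace α] {μ : Measure α}
    {f : α → ℝ} (hf : Integrable f μ) :
    ENNReal.ofReal (∫ a, f a ∂μ) ≤ ∫⁻ a, ENNReal.ofReal (f a) ∂μ := by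
  refine ENNReal.ofReal_le_of_le_toReal ?_
  rw [integral_eq_lintegral_pos_part_sub_lintegral_neg_part hf]
  exact sub_le_self _ ENNReal.toReal_nonneg

section Revenue

variable {Ω : Type*} [MeasurableSpace Ω]

noncomputable def optimalRevenue (μ : Measure Ω) (V : Ω → ℝ) : ℝ≥0∞ :=
  ⨆ p : ℝ, ⨆ _ : 0 < p, ENNReal.ofReal p * μ {ω | p < V ω}

lemma measure_lt_le_ofReal_div {μ : Measure Ω} {V : Ω → ℝ} {c p : ℝ}
    (hu : optimalRevenue μ V = ENNReal.ofReal c) (hp : 0 < p) :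
    μ {ω | p < V ω} ≤ ENNReal.ofReal (c / p) := by
  rw [ENNReal.ofReal_div_of_pos hp, ENNReal.le_div_iff_mul_le (.inl (by simpa using hp))
    (.inl ENNReal.ofReal_ne_top), mul_comm, ← hu]
  exact le_iSup₂ (f := fun p (_ : 0 < p) => ENNReal.ofReal p * μ {ω | p < V ω}) p hp

theorem ae_measure_lt_eq_ofReal_div_of_integral_log_eq {μ : Measure Ω}
    [IsProbabilityMeasure μ] {V : Ω → ℝ} (hV : AEMeasurable V μ) (hpos : ∀ᵐ ω ∂μ, 0 < V ω)
    (hint : Integrable (fun ω => log (V ω)) μ) {c : ℝ} (hc : 0 < c)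
    (htail : ∀ p, 0 < p → μ {ω | p < V ω} ≤ ENNReal.ofReal (c / p))
    (hlog : ∫ ω, log (V ω) ∂μ = 1 + log c) :
    ∀ᵐ t ∂volume.restrict (Ioi c), μ {ω | t < V ω} = ENNReal.ofReal (c / t) := by
  have hlog_div : (fun ω => log (V ω) - log c) =ᵐ[μ] fun ω => log (V ω / c) :=
    hpos.mono fun ω h => (log_div h.ne' hc.ne').symm
  have hint_div : Integrable (fun ω => log (V ω / c)) μ :=
    (hint.sub (integrable_const _)).congr hlog_div
  have hone : 1 ≤ ∫⁻ t in Ioi c, μ {ω | t < V ω} * ENNReal.ofReal t⁻¹ := by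
    rw [← lintegral_ofReal_log_div_eq μ (hpos.mono fun ω h => h.le) hV hc]
    calc (1 : ℝ≥0∞) = ENNReal.ofReal (∫ ω, log (V ω / c) ∂μ) := by
          rw [← integral_congr_ae hlog_div, integral_sub hint (integrable_const _), hlog]
          simp
      _ ≤ _ := ofReal_integral_le_lintegral_ofReal hint_div
  have hle : (fun t => μ {ω | t < V ω} * ENNReal.ofReal t⁻¹)
      ≤ᵐ[volume.restrict (Ioi c)] fun t => ENNReal.ofReal (c / t) * ENNReal.ofReal t⁻¹ :=
    ae_restrict_of_forall_mem measurableSet_Ioi fun t (ht : c < t) =>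
      mul_le_mul_left (htail t (hc.trans ht)) _
  have hbound := lintegral_Ioi_ofReal_div_mul_inv hc
  have heq := ae_eq_of_ae_le_of_lintegral_le hle
    (ne_top_of_le_ne_top ENNReal.one_ne_top (hbound ▸ lintegral_mono_ae hle))
    (by fun_prop) (by rwa [hbound])
  filter_upwards [heq, ae_restrict_mem measurableSet_Ioi] with t ht (htc : c < t)
  have ht0 : 0 < t := hc.trans htc
  exact (ENNReal.mul_left_inj (by simpa using ht0) ENNReal.ofReal_ne_top).1 ht

lemma eqOn_Ici_one_sub_div_of_ae {μ : Measure Ω} [IsProbabilityMeasure μ] {V : Ω → ℝ}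
    (hV : Measurable V) {F : ℝ → ℝ} (hF : ∀ p, F p = (μ {ω | V ω ≤ p}).toReal)
    (hcont : Continuous F) {c : ℝ} (hc : 0 < c)
    (h : ∀ᵐ t ∂volume.restrict (Ioi c), μ {ω | t < V ω} = ENNReal.ofReal (c / t)) :
    EqOn F (fun t => 1 - c / t) (Ici c) := by
  refine Measure.eqOn_of_ae_eq (μ := volume) ?_ hcont.continuousOn
    (continuousOn_const.sub (continuousOn_const.div continuousOn_id
      fun t (ht : c ≤ t) => (hc.trans_le ht).ne'))
    (by rw [interior_Ici, closure_Ioi])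
  rw [← restrict_Ioi_eq_restrict_Ici]
  filter_upwards [h, ae_restrict_mem measurableSet_Ioi] with t ht (htc : c < t)
  have hcompl : {ω | V ω ≤ t} = {ω | t < V ω}ᶜ := by ext; simp
  rw [hF, ← measureReal_def, hcompl,
    probReal_compl_eq_one_sub (measurableSet_lt measurable_const hV), measureReal_def, ht,
    ENNReal.toReal_ofReal (div_nonneg hc.le (hc.trans htc).le)]

end Revenue

/-- If `V` is a positive random variable with continuous CDF and the optimal seller
revenue equals `(1/e)·exp(E[log V])`, then `V` has the equal revenue distribution
`Φ_c` with `c = u(V)`. -/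
theorem stmt_4 {Ω : Type*} [MeasurableSpace Ω] (μ : Measure Ω) [IsProbabilityMeasure μ]
    (V : Ω → ℝ) (hV : Measurable V) (hpos : ∀ᵐ ω ∂μ, 0 < V ω)
    (F : ℝ → ℝ) (hF : ∀ p, F p = (μ {ω | V ω ≤ p}).toReal) (hcont : Continuous F)
    (hint : Integrable (fun ω => Real.log (V ω)) μ)
    (heq : (⨆ p : ℝ, ⨆ _ : 0 < p, ENNReal.ofReal p * μ {ω | p < V ω}) =
      ENNReal.ofReal ((1 / Real.exp 1) * Real.exp (∫ ω, Real.log (V ω) ∂μ))) :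
    ∀ p : ℝ,
      F p = if p ≤ ((⨆ p : ℝ, ⨆ _ : 0 < p, ENNReal.ofReal p * μ {ω | p < V ω})).toReal
        then 0
        else 1 - ((⨆ p : ℝ, ⨆ _ : 0 < p, ENNReal.ofReal p * μ {ω | p < V ω})).toReal / p := by
  change optimalRevenue μ V = _ at heq
  change ∀ p, F p =
    if p ≤ (optimalRevenue μ V).toReal then 0 else 1 - (optimalRevenue μ V).toReal / p
  set c := (optimalRevenue μ V).toReal
  rw [one_div, ← exp_neg, ← exp_add, neg_add_eq_sub] at heq
  have hc : c = exp (∫ ω, log (V ω) ∂μ - 1) := by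
    simp only [c, heq, ENNReal.toReal_ofReal (exp_pos _).le]
  have hc0 : 0 < c := hc ▸ exp_pos _
  have hlog : ∫ ω, log (V ω) ∂μ = 1 + log c := by rw [hc, log_exp]; ring
  have hu : optimalRevenue μ V = ENNReal.ofReal c := by rw [heq, hc]
  have hΦ := eqOn_Ici_one_sub_div_of_ae hV hF hcont hc0
    (ae_measure_lt_eq_ofReal_div_of_integral_log_eq hV.aemeasurable hpos hint hc0
      (fun _ => measure_lt_le_ofReal_div hu) hlog)
  have hmono : Monotone F := fun a b hab => by
    simp only [hF]
    exact ENNReal.toReal_mono (measure_ne_top _ _)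
      (measure_mono fun ω (h : V ω ≤ a) => h.trans hab)
  intro p
  split_ifs with hp
  · refine le_antisymm ?_ (hF p ▸ ENNReal.toReal_nonneg)
    calc F p ≤ F c := hmono hp
      _ = 1 - c / c := hΦ (le_refl c)
      _ = 0 := by rw [div_self hc0.ne', sub_self]
  · exact hΦ (not_le.1 hp).le
end

section
/- For any positive random variable V with continuous CDF F, the expected revenue of a seller who draws a random price P distributed as V (independent of nothing else: i.e., E[P·(1-F(P))] where P ~ F) is at least (1/e)·exp(E[log V]). -/
/-!
Write `V (1 - F V) = exp (log V + log (1 - F V))`; Jensen's inequality for `exp` bounds the revenue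
below by `exp (E[log V] + E[log (1 - F V)])`. Since `F` is continuous, `F V` is uniform on `[0, 1]`;
all that is needed is the tail bound `P(F V > s) ≤ 1 - s`, which by the layer-cake formula gives
`E[-log (1 - F V)] ≤ ∫₀^∞ e^{-t} dt = 1`.
-/

open MeasureTheory ProbabilityTheory Real Set Filter

section

variable {Ω : Type*} [MeasurableSpace Ω] {μ : Measure Ω}

theorem ofReal_exp_integral_le_lintegral_ofReal_exp [IsProbabilityMeasure μ] {g : Ω → ℝ}
    (hg : Integrable g μ) :
    ENNReal.ofReal (exp (∫ ω, g ω ∂μ)) ≤ ∫⁻ ω, ENNReal.ofReal (exp (g ω)) ∂μ := by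
  have hexp_nonneg : 0 ≤ᵐ[μ] fun ω => exp (g ω) := ae_of_all _ fun _ => (exp_pos _).le
  by_cases hexp : Integrable (fun ω => exp (g ω)) μ
  · rw [← ofReal_integral_eq_lintegral_ofReal hexp hexp_nonneg]
    exact ENNReal.ofReal_le_ofReal <| convexOn_exp.map_integral_le continuousOn_exp
      isClosed_univ (ae_of_all _ fun _ => mem_univ _) hg hexp
  · have hinf : ¬ ∫⁻ ω, ENNReal.ofReal (exp (g ω)) ∂μ < ⊤ := fun h =>
      hexp ⟨continuous_exp.comp_aestronglyMeasurable hg.1,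
        (hasFiniteIntegral_iff_ofReal hexp_nonneg).2 h⟩
    rw [not_lt, top_le_iff] at hinf
    simp [hinf]

theorem cdf_map_eq [IsProbabilityMeasure μ] {V : Ω → ℝ} (hV : Measurable V) {F : ℝ → ℝ}
    (hF : ∀ p, F p = (μ {ω | V ω ≤ p}).toReal) : cdf (μ.map V) = F := by
  have := Measure.isProbabilityMeasure_map (μ := μ) hV.aemeasurable
  ext p
  rw [hF, cdf_eq_real, map_measureReal_apply hV measurableSet_Iic]
  rfl

theorem measure_lt_comp_le_one_sub [IsProbabilityMeasure μ] {V : Ω → ℝ} (hV : Measurable V)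
    {F : ℝ → ℝ} (hF : ∀ p, F p = (μ {ω | V ω ≤ p}).toReal) (hcont : Continuous F) (s : ℝ) :
    μ {ω | s < F (V ω)} ≤ ENNReal.ofReal (1 - s) := by
  have hcdf := cdf_map_eq hV hF
  rcases le_or_gt s 0 with hs0 | hs0
  · exact prob_le_one.trans (ENNReal.one_le_ofReal.2 (by linarith))
  rcases le_or_gt 1 s with hs1 | hs1
  · have : {ω | s < F (V ω)} = ∅ := by
      ext ω
      simp only [mem_empty_iff_false, iff_false]
      exact not_lt.2 <| (hcdf ▸ cdf_le_one _ _).trans hs1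
    simp [this]
  obtain ⟨q, hq⟩ : s ∈ range F := by
    refine mem_range_of_exists_le_of_exists_ge hcont ?_ ?_
    · exact ((hcdf ▸ tendsto_cdf_atBot _).eventually (gt_mem_nhds hs0)).exists.imp
        fun _ => le_of_lt
    · exact ((hcdf ▸ tendsto_cdf_atTop _).eventually (lt_mem_nhds hs1)).exists.imp
        fun _ => le_of_lt
  have hsub : {ω | s < F (V ω)} ⊆ {ω | V ω ≤ q}ᶜ := fun ω hω hle =>
    (not_lt.2 (hq ▸ (hcdf ▸ monotone_cdf _) hle)) hω
  calc μ {ω | s < F (V ω)} ≤ μ {ω | V ω ≤ q}ᶜ := measure_mono hsub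
    _ = 1 - ENNReal.ofReal s := by
      rw [prob_compl_eq_one_sub (s := {ω | V ω ≤ q}) (hV measurableSet_Iic), ← hq, hF,
        ENNReal.ofReal_toReal (measure_ne_top _ _)]
    _ = ENNReal.ofReal (1 - s) := by rw [ENNReal.ofReal_sub _ hs0.le, ENNReal.ofReal_one]

theorem lt_of_lt_neg_log_one_sub {t x : ℝ} (ht : 0 < t) (h : t < -log (1 - x)) :
    1 - exp (-t) < x := by
  rcases lt_trichotomy (1 - x) 0 with hneg | hzero | hpos
  · linarith [exp_pos (-t)]
  · rw [hzero, log_zero] at h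
    linarith
  · linarith [(log_lt_iff_lt_exp hpos).1 (by linarith : log (1 - x) < -t)]

variable {X : Ω → ℝ}

theorem ae_lt_one_of_measure_lt_le (hX : ∀ s, μ {ω | s < X ω} ≤ ENNReal.ofReal (1 - s)) :
    ∀ᵐ ω ∂μ, X ω < 1 := by
  simp only [ae_iff, not_lt]
  refine le_antisymm (ENNReal.le_of_forall_pos_le_add fun ε hε _ => ?_) zero_le
  calc μ {ω | 1 ≤ X ω} ≤ μ {ω | 1 - ε < X ω} := measure_mono fun ω (h : 1 ≤ X ω) => by
        show 1 - (ε : ℝ) < X ω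
        linarith [NNReal.coe_pos.2 hε]
    _ ≤ ENNReal.ofReal (1 - (1 - ε)) := hX _
    _ = 0 + ε := by simp

theorem ae_nonneg_neg_log_one_sub (hX0 : 0 ≤ᵐ[μ] X)
    (hX : ∀ s, μ {ω | s < X ω} ≤ ENNReal.ofReal (1 - s)) :
    0 ≤ᵐ[μ] fun ω => -log (1 - X ω) := by
  filter_upwards [hX0, ae_lt_one_of_measure_lt_le hX] with ω (h0 : 0 ≤ X ω) h1
  exact neg_nonneg.2 (log_nonpos (by linarith) (by linarith))

theorem lintegral_neg_log_one_sub_le_one (hXm : AEMeasurable X μ) (hX0 : 0 ≤ᵐ[μ] X)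
    (hX : ∀ s, μ {ω | s < X ω} ≤ ENNReal.ofReal (1 - s)) :
    ∫⁻ ω, ENNReal.ofReal (-log (1 - X ω)) ∂μ ≤ 1 := by
  rw [lintegral_eq_lintegral_meas_lt μ (ae_nonneg_neg_log_one_sub hX0 hX)
    (hXm.const_sub 1).log.neg]
  have htail : ∀ t ∈ Ioi (0 : ℝ), μ {ω | t < -log (1 - X ω)} ≤ ENNReal.ofReal (exp (-t)) :=
    fun t ht => calc
      μ {ω | t < -log (1 - X ω)} ≤ μ {ω | 1 - exp (-t) < X ω} :=
        measure_mono fun _ => lt_of_lt_neg_log_one_sub ht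
      _ ≤ ENNReal.ofReal (exp (-t)) := by simpa using hX (1 - exp (-t))
  calc ∫⁻ t in Ioi 0, μ {ω | t < -log (1 - X ω)}
      ≤ ∫⁻ t in Ioi 0, ENNReal.ofReal (exp (-t)) := setLIntegral_mono' measurableSet_Ioi htail
    _ = ENNReal.ofReal (∫ t in Ioi 0, exp (-t)) := by
      have hint : IntegrableOn (fun t : ℝ => exp (-t)) (Ioi 0) := by
        simpa using exp_neg_integrableOn_Ioi 0 one_pos
      exact (ofReal_integral_eq_lintegral_ofReal hint (ae_of_all _ fun _ => (exp_pos _).le)).symm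
    _ = 1 := by rw [integral_exp_neg_Ioi_zero, ENNReal.ofReal_one]

theorem integrable_log_one_sub (hXm : AEMeasurable X μ) (hX0 : 0 ≤ᵐ[μ] X)
    (hX : ∀ s, μ {ω | s < X ω} ≤ ENNReal.ofReal (1 - s)) :
    Integrable (fun ω => log (1 - X ω)) μ := by
  suffices Integrable (fun ω => -log (1 - X ω)) μ by simpa using this.neg
  refine ⟨(hXm.const_sub 1).log.neg.aestronglyMeasurable, ?_⟩
  rw [hasFiniteIntegral_iff_ofReal (ae_nonneg_neg_log_one_sub hX0 hX)]
  exact (lintegral_neg_log_one_sub_le_one hXm hX0 hX).trans_lt ENNReal.one_lt_top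

theorem neg_one_le_integral_log_one_sub (hXm : AEMeasurable X μ) (hX0 : 0 ≤ᵐ[μ] X)
    (hX : ∀ s, μ {ω | s < X ω} ≤ ENNReal.ofReal (1 - s)) :
    -1 ≤ ∫ ω, log (1 - X ω) ∂μ := by
  rw [neg_le, ← integral_neg, integral_eq_lintegral_of_nonneg_ae
    (ae_nonneg_neg_log_one_sub hX0 hX) (hXm.const_sub 1).log.neg.aestronglyMeasurable]
  exact ENNReal.toReal_le_of_le_ofReal zero_le_one
    (by simpa using lintegral_neg_log_one_sub_le_one hXm hX0 hX)

end

/-- A seller who draws a random price `P ~ F` (the distribution of the valuation `V`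
itself, with continuous CDF `F`) obtains expected revenue `E[P·(1-F(P))]` at least
`(1/e)·exp(E[log V])`. -/
theorem stmt_5 {Ω : Type*} [MeasurableSpace Ω] (μ : Measure Ω) [IsProbabilityMeasure μ]
    (V : Ω → ℝ) (hV : Measurable V) (hpos : ∀ᵐ ω ∂μ, 0 < V ω)
    (F : ℝ → ℝ) (hF : ∀ p, F p = (μ {ω | V ω ≤ p}).toReal) (hcont : Continuous F)
    (hint : Integrable (fun ω => Real.log (V ω)) μ) :
    ENNReal.ofReal ((1 / Real.exp 1) * Real.exp (∫ ω, Real.log (V ω) ∂μ)) ≤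
      ∫⁻ ω, ENNReal.ofReal (V ω * (1 - F (V ω))) ∂μ := by
  have hXm : AEMeasurable (fun ω => F (V ω)) μ := (hcont.measurable.comp hV).aemeasurable
  have hX0 : 0 ≤ᵐ[μ] fun ω => F (V ω) := ae_of_all _ fun ω =>
    show 0 ≤ F (V ω) from hF (V ω) ▸ ENNReal.toReal_nonneg
  have hX := measure_lt_comp_le_one_sub hV hF hcont
  have hlog := integrable_log_one_sub hXm hX0 hX
  calc ENNReal.ofReal ((1 / exp 1) * exp (∫ ω, log (V ω) ∂μ))
      = ENNReal.ofReal (exp (∫ ω, log (V ω) ∂μ - 1)) := by rw [exp_sub, one_div_mul_eq_div]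
    _ ≤ ENNReal.ofReal (exp (∫ ω, (log (V ω) + log (1 - F (V ω))) ∂μ)) := by
      gcongr
      rw [integral_add hint hlog]
      linarith [neg_one_le_integral_log_one_sub hXm hX0 hX]
    _ ≤ ∫⁻ ω, ENNReal.ofReal (exp (log (V ω) + log (1 - F (V ω)))) ∂μ :=
      ofReal_exp_integral_le_lintegral_ofReal_exp (hint.add hlog)
    _ = ∫⁻ ω, ENNReal.ofReal (V ω * (1 - F (V ω))) ∂μ := by
      refine lintegral_congr_ae ?_
      filter_upwards [hpos, ae_lt_one_of_measure_lt_le hX] with ω hVω hFω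
      rw [exp_add, exp_log hVω, exp_log (sub_pos.2 hFω)]
end

section
/- For any positive random variable V with finite expectation, the optimal seller revenue u(V) = sup_{p>0} p·P(V > p) is at most E[V], with equality if and only if V is almost surely constant. -/
/-!
Posting the price `p` earns `p * 1{p < V} ≤ V` pointwise, whence `u(V) ≤ E[V]`. If `V` is not
a.e. constant, some level `c` (for instance `c = E[V]`) has positive mass on both sides. A price
`p ≤ c` then earns at most `E[min V c]`, and a price `p ≥ c` at most `E[V; c < V]`. Both are
strictly below `E[V]`: the first because `c < V` with positive probability, the second because
`0 < V ≤ c` with positive probability. So the supremum stays strictly below `E[V]`.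
-/

open MeasureTheory

section

variable {Ω : Type*} [MeasurableSpace Ω] {μ : Measure Ω} {V : Ω → ℝ}

theorem integral_lt_integral_of_ae_le_of_measure_lt_ne_zero {f g : Ω → ℝ}
    (hf : Integrable f μ) (hg : Integrable g μ) (hfg : f ≤ᵐ[μ] g)
    (hlt : μ {x | f x < g x} ≠ 0) : ∫ x, f x ∂μ < ∫ x, g x ∂μ := by
  refine (integral_mono_ae hf hg hfg).lt_of_ne fun heq => hlt ?_
  exact measure_mono_null (fun x hx => hx.ne)
    (ae_iff.1 ((integral_eq_iff_of_ae_le hf hg hfg).1 heq))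

theorem setIntegral_ge_of_const_le_real₀ {f : Ω → ℝ} {s : Set Ω} {c : ℝ}
    (hs : NullMeasurableSet s μ) (hμs : μ s ≠ ⊤) (hf : ∀ x ∈ s, c ≤ f x)
    (hfint : IntegrableOn f s μ) : c * μ.real s ≤ ∫ x in s, f x ∂μ := by
  rw [mul_comm, ← smul_eq_mul, ← setIntegral_const]
  exact setIntegral_mono_on₀ (integrableOn_const hμs) hfint hs hf

noncomputable def revenue (μ : Measure Ω) (V : Ω → ℝ) : ℝ :=
  ⨆ p : {p : ℝ // 0 < p}, (p : ℝ) * μ.real {ω | (p : ℝ) < V ω}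

theorem revenue_le {B : ℝ} (h : ∀ p : ℝ, 0 < p → p * μ.real {ω | p < V ω} ≤ B) :
    revenue μ V ≤ B :=
  have : Nonempty {p : ℝ // 0 < p} := ⟨⟨1, one_pos⟩⟩
  ciSup_le fun p => h p p.2

theorem le_revenue {B : ℝ} (h : ∀ p : ℝ, 0 < p → p * μ.real {ω | p < V ω} ≤ B)
    {p : ℝ} (hp : 0 < p) : p * μ.real {ω | p < V ω} ≤ revenue μ V :=
  le_ciSup (f := fun p : {p : ℝ // 0 < p} => (p : ℝ) * μ.real {ω | (p : ℝ) < V ω})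
    ⟨B, by rintro _ ⟨q, rfl⟩; exact h q q.2⟩ ⟨p, hp⟩

theorem revenue_eq_of_ae_eq_const [IsProbabilityMeasure μ] {a : ℝ} (ha : V =ᵐ[μ] fun _ => a)
    (ha0 : 0 < a) : revenue μ V = a := by
  have hsold : ∀ p, μ.real {ω | p < V ω} = if p < a then 1 else 0 := by
    intro p
    have hset : {ω | p < V ω} =ᵐ[μ] {_ω | p < a} := ha.mono fun ω hω => congrArg (p < ·) hω
    rw [measureReal_congr hset]
    split_ifs <;> simp [*]
  have hbound : ∀ p : ℝ, 0 < p → p * μ.real {ω | p < V ω} ≤ a := by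
    intro p _
    rw [hsold]
    split_ifs <;> linarith
  refine le_antisymm (revenue_le hbound) (le_of_forall_lt fun b hb => ?_)
  obtain ⟨p, hbp, hpa⟩ := exists_between (max_lt hb ha0)
  have hp : 0 < p := (le_max_right b 0).trans_lt hbp
  calc b < p := (le_max_left b 0).trans_lt hbp
    _ = p * μ.real {ω | p < V ω} := by rw [hsold, if_pos hpa, mul_one]
    _ ≤ revenue μ V := le_revenue hbound hp

variable (hVint : Integrable V μ)
include hVint

theorem nullMeasurableSet_lt_of_integrable (c : ℝ) : NullMeasurableSet {ω | c < V ω} μ :=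
  nullMeasurableSet_lt aemeasurable_const hVint.aemeasurable

theorem setIntegral_lt_integral_of_measure_le_ne_zero (hpos : ∀ᵐ ω ∂μ, 0 < V ω) {c : ℝ}
    (hc : μ {ω | V ω ≤ c} ≠ 0) : ∫ ω in {ω | c < V ω}, V ω ∂μ < ∫ ω, V ω ∂μ := by
  rw [← integral_indicator₀ (nullMeasurableSet_lt_of_integrable hVint c)]
  refine integral_lt_integral_of_ae_le_of_measure_lt_ne_zero
    (hVint.indicator₀ (nullMeasurableSet_lt_of_integrable hVint c)) hVint ?_ ?_
  · filter_upwards [hpos] with ω hω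
    by_cases h : c < V ω <;> simp [Set.indicator, h, hω.le]
  · refine fun hnull => hc (measure_mono_null_ae ?_ hnull)
    filter_upwards [hpos] with ω hω (hle : V ω ≤ c)
    show {ω | c < V ω}.indicator V ω < V ω
    rwa [Set.indicator_of_notMem (s := {ω | c < V ω}) (a := ω) (not_lt.2 hle)]

section Finite

variable [IsFiniteMeasure μ]

theorem mul_measureReal_lt_le_setIntegral (p : ℝ) :
    p * μ.real {ω | p < V ω} ≤ ∫ ω in {ω | p < V ω}, V ω ∂μ :=
  setIntegral_ge_of_const_le_real₀ (nullMeasurableSet_lt_of_integrable hVint p)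
    (measure_ne_top μ _) (fun _ hω => hω.le) hVint.integrableOn

theorem revenue_le_integral (hV0 : 0 ≤ᵐ[μ] V) : revenue μ V ≤ ∫ ω, V ω ∂μ :=
  revenue_le fun p _ =>
    (mul_measureReal_lt_le_setIntegral hVint p).trans (setIntegral_le_integral hVint hV0)

theorem revenue_le_max (hV0 : 0 ≤ᵐ[μ] V) (c : ℝ) :
    revenue μ V ≤ max (∫ ω, min (V ω) c ∂μ) (∫ ω in {ω | c < V ω}, V ω ∂μ) := by
  refine revenue_le fun p hp => ?_
  rcases le_total p c with hpc | hcp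
  · have hmin : Integrable (fun ω => min (V ω) c) μ := hVint.inf (integrable_const c)
    calc p * μ.real {ω | p < V ω} ≤ ∫ ω in {ω | p < V ω}, min (V ω) c ∂μ :=
          setIntegral_ge_of_const_le_real₀ (nullMeasurableSet_lt_of_integrable hVint p)
            (measure_ne_top μ _) (fun _ hω => le_min hω.le hpc) hmin.integrableOn
      _ ≤ ∫ ω, min (V ω) c ∂μ :=
          setIntegral_le_integral hmin (hV0.mono fun _ hω => le_min hω (hp.le.trans hpc))
      _ ≤ _ := le_max_left _ _
  · calc p * μ.real {ω | p < V ω} ≤ ∫ ω in {ω | p < V ω}, V ω ∂μ :=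
          mul_measureReal_lt_le_setIntegral hVint p
      _ ≤ ∫ ω in {ω | c < V ω}, V ω ∂μ :=
          setIntegral_mono_set hVint.integrableOn (ae_restrict_of_ae hV0)
            (ae_of_all _ fun _ hω => hcp.trans_lt hω)
      _ ≤ _ := le_max_right _ _

theorem integral_min_lt_integral {c : ℝ} (hc : μ {ω | c < V ω} ≠ 0) :
    ∫ ω, min (V ω) c ∂μ < ∫ ω, V ω ∂μ :=
  integral_lt_integral_of_ae_le_of_measure_lt_ne_zero (hVint.inf (integrable_const c)) hVint
    (ae_of_all _ fun _ => min_le_left _ _)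
    (by simpa only [min_lt_iff, lt_irrefl, false_or] using hc)

end Finite

section Probability

variable [IsProbabilityMeasure μ]

theorem exists_measure_le_ne_zero_and_measure_lt_ne_zero
    (hV : ¬ ∃ a, V =ᵐ[μ] fun _ => a) :
    ∃ c, μ {ω | V ω ≤ c} ≠ 0 ∧ μ {ω | c < V ω} ≠ 0 := by
  have hconst : Integrable (fun _ => ∫ ω, V ω ∂μ) μ := integrable_const _
  have hmean : ∫ ω, V ω ∂μ = ∫ _, ∫ ω, V ω ∂μ ∂μ := by simp
  refine ⟨∫ ω, V ω ∂μ, fun h => hV ⟨∫ ω, V ω ∂μ, ?_⟩, fun h => hV ⟨∫ ω, V ω ∂μ, ?_⟩⟩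
  · refine ((integral_eq_iff_of_ae_le hconst hVint ?_).1 hmean.symm).symm
    exact (measure_eq_zero_iff_ae_notMem.1 h).mono fun _ hω => (not_le.1 hω).le
  · refine (integral_eq_iff_of_ae_le hVint hconst ?_).1 hmean
    exact (measure_eq_zero_iff_ae_notMem.1 h).mono fun _ hω => not_lt.1 hω

theorem revenue_lt_integral (hpos : ∀ᵐ ω ∂μ, 0 < V ω)
    (hV : ¬ ∃ a, V =ᵐ[μ] fun _ => a) : revenue μ V < ∫ ω, V ω ∂μ := by
  obtain ⟨c, hle, hlt⟩ := exists_measure_le_ne_zero_and_measure_lt_ne_zero hVint hV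
  calc revenue μ V ≤ max (∫ ω, min (V ω) c ∂μ) (∫ ω in {ω | c < V ω}, V ω ∂μ) :=
        revenue_le_max hVint (hpos.mono fun _ hω => hω.le) c
    _ < ∫ ω, V ω ∂μ :=
        max_lt (integral_min_lt_integral hVint hlt)
          (setIntegral_lt_integral_of_measure_le_ne_zero hVint hpos hle)

end Probability

end

theorem stmt_10_general {Ω : Type*} [MeasurableSpace Ω] (μ : Measure Ω) [IsProbabilityMeasure μ]
    (V : Ω → ℝ) (hpos : ∀ᵐ ω ∂μ, 0 < V ω)
    (hVint : Integrable V μ) :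
    (⨆ p : {p : ℝ // 0 < p}, (p : ℝ) * (μ {ω | (p : ℝ) < V ω}).toReal) ≤ ∫ ω, V ω ∂μ ∧
      ((⨆ p : {p : ℝ // 0 < p}, (p : ℝ) * (μ {ω | (p : ℝ) < V ω}).toReal) = ∫ ω, V ω ∂μ ↔
        ∃ a : ℝ, V =ᵐ[μ] fun _ => a) := by
  change revenue μ V ≤ _ ∧ (revenue μ V = _ ↔ _)
  refine ⟨revenue_le_integral hVint (hpos.mono fun _ hω => hω.le), fun heq => ?_, ?_⟩
  · by_contra hV
    exact (revenue_lt_integral hVint hpos hV).ne heq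
  · rintro ⟨a, ha⟩
    obtain ⟨ω, hω, hωa⟩ := (hpos.and ha).exists
    rw [revenue_eq_of_ae_eq_const ha (hω.trans_eq hωa), integral_congr_ae ha]
    simp

/-- For a positive random variable `V` with finite expectation, the optimal seller
revenue `u(V) = sup_{p>0} p·P(V > p)` is at most `E[V]`, with equality iff `V` is
almost surely constant. -/
theorem stmt_10 {Ω : Type*} [MeasurableSpace Ω] (μ : Measure Ω) [IsProbabilityMeasure μ]
    (V : Ω → ℝ) (hV : Measurable V) (hpos : ∀ᵐ ω ∂μ, 0 < V ω)
    (hVint : Integrable V μ) :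
    (⨆ p : {p : ℝ // 0 < p}, (p : ℝ) * (μ {ω | (p : ℝ) < V ω}).toReal) ≤ ∫ ω, V ω ∂μ ∧
      ((⨆ p : {p : ℝ // 0 < p}, (p : ℝ) * (μ {ω | (p : ℝ) < V ω}).toReal) = ∫ ω, V ω ∂μ ↔
        ∃ a : ℝ, V =ᵐ[μ] fun _ => a) :=
  stmt_10_general μ V hpos hVint
end

section
/- For -1/e ≤ x ≤ 0, the principal branch of the Lambert W function satisfies W(x) ≤ -1 + sqrt(2(e·x + 1)). -/
/-! With `t = W(x) + 1 ≥ 0` the defining equation reads `e·x = (t - 1)·e^t`, so the bound is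
`t² ≤ 2((t - 1)e^t + 1)`. The difference `(t - 1)e^t + 1 - t²/2` vanishes at `0` and has
derivative `t(e^t - 1) ≥ 0` everywhere, hence is nonnegative for `t ≥ 0`. -/

open Real

lemma monotone_sub_one_mul_exp_sub_sq_div_two :
    Monotone fun t : ℝ => (t - 1) * exp t + 1 - t ^ 2 / 2 := by
  refine monotone_of_hasDerivAt_nonneg (f' := fun t => t * (exp t - 1)) (fun t => ?_) fun t => ?_
  · exact ((((hasDerivAt_id t).sub_const 1).mul (hasDerivAt_exp t)).add_const 1).sub
      ((hasDerivAt_pow 2 t).div_const 2) |>.congr_deriv (by simp only [id]; ring)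
  · rcases le_total 0 t with ht | ht
    · exact mul_nonneg ht (sub_nonneg.2 (one_le_exp ht))
    · exact mul_nonneg_of_nonpos_of_nonpos ht (sub_nonpos.2 (exp_le_one_iff.2 ht))

lemma sq_le_two_mul_sub_one_mul_exp_add_one {t : ℝ} (ht : 0 ≤ t) :
    t ^ 2 ≤ 2 * ((t - 1) * exp t + 1) := by
  have := monotone_sub_one_mul_exp_sub_sq_div_two ht
  simp only [exp_zero] at this
  linarith

lemma add_one_le_sqrt_of_neg_one_le {w : ℝ} (hw : -1 ≤ w) :
    w + 1 ≤ √(2 * (exp 1 * (w * exp w) + 1)) := by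
  have hexp : exp 1 * (w * exp w) = (w + 1 - 1) * exp (w + 1) := by
    rw [exp_add]
    ring
  rw [hexp]
  exact le_sqrt_of_sq_le (sq_le_two_mul_sub_one_mul_exp_add_one (by linarith))

/-- For `-1/e ≤ x ≤ 0`, the principal branch of the Lambert W function (i.e. the
solution `w ≥ -1` of `w·e^w = x`) satisfies `W(x) ≤ -1 + sqrt(2(e·x + 1))`. -/
theorem stmt_13 : ∀ x w : ℝ, -(1 / Real.exp 1) ≤ x → x ≤ 0 →
    -1 ≤ w → w * Real.exp w = x →
    w ≤ -1 + Real.sqrt (2 * (Real.exp 1 * x + 1)) := by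
  rintro x w - - hw rfl
  linarith [add_one_le_sqrt_of_neg_one_le hw]
end

section
/- Let 0 < c ≤ 1 and let v ∈ (0,1] satisfy v·e^{1-v} = c. Then v ≥ 1 - sqrt(2(1-c)). -/
/-!
Put `t = 1 - v ≥ 0`, so that `c = (1 - t) e^t`. The function `1 - t²/2 - (1 - t) e^t`
vanishes at `0` and has derivative `t (e^t - 1) ≥ 0` for `t ≥ 0`, hence `c ≤ 1 - t²/2`,
i.e. `t² ≤ 2 (1 - c)`.
-/

open Real Set

lemma one_sub_mul_exp_le_one_sub_sq_div_two {t : ℝ} (ht : 0 ≤ t) :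
    (1 - t) * exp t ≤ 1 - t ^ 2 / 2 := by
  let f : ℝ → ℝ := fun s => 1 - s ^ 2 / 2 - (1 - s) * exp s
  have hderiv (s : ℝ) : HasDerivAt f (s * (exp s - 1)) s := by
    have := ((((hasDerivAt_pow 2 s).div_const 2).const_sub 1).sub
      (((hasDerivAt_id s).const_sub 1).mul (hasDerivAt_exp s)))
    exact this.congr_deriv (by norm_num; ring)
  have hmono : MonotoneOn f (Ici 0) := by
    refine monotoneOn_of_hasDerivWithinAt_nonneg (convex_Ici 0)
      (fun s _ => (hderiv s).continuousAt.continuousWithinAt)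
      (fun s _ => (hderiv s).hasDerivWithinAt) fun s hs => ?_
    rw [interior_Ici, mem_Ioi] at hs
    exact mul_nonneg hs.le (sub_nonneg.mpr (one_le_exp hs.le))
  have hf := hmono self_mem_Ici (mem_Ici.mpr ht) ht
  norm_num [f] at hf
  linarith

/-- If `0 < c ≤ 1` and `v ∈ (0,1]` satisfies `v·e^{1-v} = c`, then
`v ≥ 1 - sqrt(2(1-c))`. -/
theorem stmt_14 : ∀ c v : ℝ, 0 < c → c ≤ 1 → 0 < v → v ≤ 1 →
    v * Real.exp (1 - v) = c → 1 - Real.sqrt (2 * (1 - c)) ≤ v := by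
  intro c v _ _ _ hv1 hc
  have hbound := one_sub_mul_exp_le_one_sub_sq_div_two (sub_nonneg.mpr hv1)
  rw [sub_sub_cancel, hc] at hbound
  have hsq : (1 - v) ^ 2 ≤ 2 * (1 - c) := by linarith
  linarith [le_sqrt_of_sq_le hsq]
end

section
/- Let V be a positive random variable with finite expectation and exp(E[log V]) = (1-δ)·E[V] for δ ∈ (0,1). Then u(V) ≥ (1 - 2^{4/3}·δ^{1/3})·E[V]. -/
/-! Normalise by `m = E[V]`. The function `x ↦ x - 1 - log x` is nonnegative, and its expectation
at `V / m` is exactly `-log (1 - δ)`. It is decreasing on `(0, 1]`, so on the event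
`{V ≤ (1 - ε) m}` it is at least `-ε - log (1 - ε) ≥ ε² / 2`, and Markov's inequality bounds the
probability `s` of that event. With `ε³ = 2δ` this gives `(1 - ε) s ≤ ε`, so the level
`p = (1 - ε) m` has `p · P(V > p) = (1 - ε)(1 - s) m ≥ (1 - 2ε) m`, and `2ε = 2^{4/3} δ^{1/3}`. -/

open MeasureTheory

namespace Real

theorem add_sq_div_two_add_cube_div_three_le_neg_log_one_sub {x : ℝ} (hx0 : 0 ≤ x) (hx1 : x < 1) :
    x + x ^ 2 / 2 + x ^ 3 / 3 ≤ -log (1 - x) := by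
  have h := sum_le_hasSum (Finset.range 3) (fun n _ => by positivity)
    (hasSum_pow_div_log_of_abs_lt_one (by rwa [abs_of_nonneg hx0]))
  norm_num [Finset.sum_range_succ] at h
  linarith

theorem neg_log_one_sub_le_div {x : ℝ} (hx1 : x < 1) : -log (1 - x) ≤ x / (1 - x) := by
  have h := one_sub_inv_le_log_of_pos (sub_pos.2 hx1)
  have hne : 1 - x ≠ 0 := (sub_pos.2 hx1).ne'
  have : x / (1 - x) = (1 - x)⁻¹ - 1 := by field_simp; ring
  linarith

theorem antitoneOn_sub_log : AntitoneOn (fun x => x - log x) (Set.Ioc 0 1) := by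
  rintro x ⟨hx0, -⟩ y ⟨hy0, hy1⟩ hxy
  have h := log_le_sub_one_of_pos (div_pos hx0 hy0)
  rw [log_div hx0.ne' hy0.ne'] at h
  have : x / y - 1 ≤ x - y := by
    rw [div_sub_one hy0.ne', div_le_iff₀ hy0]
    nlinarith
  dsimp only
  linarith

theorem neg_log_one_sub_cube_half_mul_le {ε : ℝ} (hε0 : 0 < ε) (hε1 : ε < 1) :
    -log (1 - ε ^ 3 / 2) * (1 - ε) ≤ ε * (-ε - log (1 - ε)) := by
  have hδ : ε ^ 3 / 2 < 1 := by nlinarith [pow_lt_one₀ hε0.le hε1 (n := 3) (by norm_num)]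
  have hupper := neg_log_one_sub_le_div hδ
  have hlower := add_sq_div_two_add_cube_div_three_le_neg_log_one_sub hε0.le hε1
  calc -log (1 - ε ^ 3 / 2) * (1 - ε) ≤ ε ^ 3 / 2 / (1 - ε ^ 3 / 2) * (1 - ε) := by
        gcongr
    _ ≤ ε * (ε ^ 2 / 2 + ε ^ 3 / 3) := by
        rw [div_mul_eq_mul_div, div_le_iff₀ (by linarith)]
        nlinarith [pow_pos hε0 3, pow_pos hε0 4, pow_pos hε0 5, pow_pos hε0 6]
    _ ≤ ε * (-ε - log (1 - ε)) := by gcongr; linarith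

end Real

open Real

section

variable {Ω : Type*} [MeasurableSpace Ω] {μ : Measure Ω}

section Finite

variable [IsFiniteMeasure μ]

theorem mul_measureReal_setOf_le_le_integral_sub_one_sub_log {X : Ω → ℝ} (hpos : ∀ᵐ ω ∂μ, 0 < X ω)
    (hint : Integrable (fun ω => X ω - 1 - log (X ω)) μ) {c : ℝ} (hc0 : 0 < c) (hc1 : c ≤ 1) :
    (c - 1 - log c) * μ.real {ω | X ω ≤ c} ≤ ∫ ω, X ω - 1 - log (X ω) ∂μ := by
  have hnonneg : 0 ≤ᵐ[μ] fun ω => X ω - 1 - log (X ω) :=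
    hpos.mono fun ω hω => show 0 ≤ X ω - 1 - log (X ω) by linarith [log_le_sub_one_of_pos hω]
  have hsubset : {ω | X ω ≤ c} ≤ᵐ[μ] {ω | c - 1 - log c ≤ X ω - 1 - log (X ω)} :=
    hpos.mono fun ω hω (hle : X ω ≤ c) =>
      show c - 1 - log c ≤ X ω - 1 - log (X ω) by
        linarith [antitoneOn_sub_log ⟨hω, hle.trans hc1⟩ ⟨hc0, hc1⟩ hle]
  calc (c - 1 - log c) * μ.real {ω | X ω ≤ c}
      ≤ (c - 1 - log c) * μ.real {ω | c - 1 - log c ≤ X ω - 1 - log (X ω)} := by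
        have hgap : 0 ≤ c - 1 - log c := by linarith [log_le_sub_one_of_pos hc0]
        exact mul_le_mul_of_nonneg_left
          (ENNReal.toReal_mono (measure_ne_top _ _) (measure_mono_ae hsubset)) hgap
    _ ≤ ∫ ω, X ω - 1 - log (X ω) ∂μ := mul_meas_ge_le_integral_of_nonneg hnonneg hint _

theorem bddAbove_range_mul_measureReal_lt {V : Ω → ℝ} (hnonneg : 0 ≤ᵐ[μ] V) (hint : Integrable V μ) :
    BddAbove (Set.range fun p : {p : ℝ // 0 < p} => (p : ℝ) * (μ {ω | (p : ℝ) < V ω}).toReal) := by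
  refine ⟨∫ ω, V ω ∂μ, ?_⟩
  rintro _ ⟨⟨p, hp⟩, rfl⟩
  calc p * μ.real {ω | p < V ω} ≤ p * μ.real {ω | p ≤ V ω} := by
        refine mul_le_mul_of_nonneg_left (measureReal_mono fun ω (hω : p < V ω) => ?_) hp.le
        exact hω.le
    _ ≤ ∫ ω, V ω ∂μ := mul_meas_ge_le_integral_of_nonneg hnonneg hint p

end Finite

variable [IsProbabilityMeasure μ]

theorem integrable_and_integral_div_sub_one_sub_log_div {V : Ω → ℝ} (hpos : ∀ᵐ ω ∂μ, 0 < V ω)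
    (hVint : Integrable V μ) (hlogint : Integrable (fun ω => log (V ω)) μ) {m : ℝ} (hm : 0 < m) :
    Integrable (fun ω => V ω / m - 1 - log (V ω / m)) μ ∧
      ∫ ω, V ω / m - 1 - log (V ω / m) ∂μ = (∫ ω, V ω ∂μ) / m - 1 - (∫ ω, log (V ω) ∂μ) + log m := by
  have hlog : (fun ω => V ω / m - 1 - (log (V ω) - log m)) =ᵐ[μ]
      fun ω => V ω / m - 1 - log (V ω / m) :=
    hpos.mono fun ω hω => by simp only [log_div hω.ne' hm.ne']
  have hint1 : Integrable (fun ω => V ω / m - 1) μ := (hVint.div_const m).sub (integrable_const 1)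
  have hint2 : Integrable (fun ω => log (V ω) - log m) μ := hlogint.sub (integrable_const _)
  refine ⟨(hint1.sub hint2).congr hlog, ?_⟩
  rw [← integral_congr_ae hlog, integral_sub hint1 hint2, integral_sub (hVint.div_const m)
    (integrable_const 1), integral_sub hlogint (integrable_const _), integral_div]
  simp only [integral_const, probReal_univ, one_smul]
  ring

theorem one_sub_two_mul_integral_le_iSup {V : Ω → ℝ} (hpos : ∀ᵐ ω ∂μ, 0 < V ω) (hVint : Integrable V μ)
    (hlogint : Integrable (fun ω => log (V ω)) μ) {ε : ℝ} (hε0 : 0 < ε) (hε1 : ε < 1)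
    (hgeo : exp (∫ ω, log (V ω) ∂μ) = (1 - ε ^ 3 / 2) * ∫ ω, V ω ∂μ) :
    (1 - 2 * ε) * (∫ ω, V ω ∂μ) ≤
      ⨆ p : {p : ℝ // 0 < p}, (p : ℝ) * (μ {ω | (p : ℝ) < V ω}).toReal := by
  set m := ∫ ω, V ω ∂μ
  have hδ : ε ^ 3 / 2 < 1 := by nlinarith [pow_lt_one₀ hε0.le hε1 (n := 3) (by norm_num)]
  have hm : 0 < m := pos_of_mul_pos_right (hgeo ▸ exp_pos _) (by linarith)
  have hlog : ∫ ω, log (V ω) ∂μ = log (1 - ε ^ 3 / 2) + log m := by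
    rw [← log_exp (∫ ω, log (V ω) ∂μ), hgeo, log_mul (by linarith) hm.ne']
  obtain ⟨hint, hval⟩ := integrable_and_integral_div_sub_one_sub_log_div hpos hVint hlogint hm
  set s := μ.real {ω | V ω / m ≤ 1 - ε}
  have hmarkov : (-ε - log (1 - ε)) * s ≤ -log (1 - ε ^ 3 / 2) := by
    have h := mul_measureReal_setOf_le_le_integral_sub_one_sub_log
      (hpos.mono fun ω h => div_pos h hm) hint (c := 1 - ε) (by linarith) (by linarith)
    rw [hval, hlog, div_self hm.ne'] at h
    convert h using 1 <;> ring
  have hlevel : ε ^ 2 / 2 ≤ -ε - log (1 - ε) := by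
    linarith [add_sq_div_two_add_cube_div_three_le_neg_log_one_sub hε0.le hε1, pow_pos hε0 3]
  have hs : s * (1 - ε) ≤ ε := by
    refine le_of_mul_le_mul_left ?_ (lt_of_lt_of_le (by positivity) hlevel)
    nlinarith [neg_log_one_sub_cube_half_mul_le hε0 hε1]
  have htail : μ.real {ω | (1 - ε) * m < V ω} = 1 - s := by
    have hset : {ω | (1 - ε) * m < V ω} = {ω | V ω / m ≤ 1 - ε}ᶜ := by
      ext ω; simp [div_le_iff₀ hm, not_le]
    have hmeas : NullMeasurableSet {ω | V ω / m ≤ 1 - ε} μ :=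
      (hVint.aemeasurable.div_const m).nullMeasurable measurableSet_Iic
    rw [hset, measureReal_compl₀ hmeas, probReal_univ]
  refine le_ciSup_of_le (bddAbove_range_mul_measureReal_lt (hpos.mono fun _ h => h.le) hVint)
    ⟨(1 - ε) * m, mul_pos (by linarith) hm⟩ ?_
  change _ ≤ (1 - ε) * m * μ.real {ω | (1 - ε) * m < V ω}
  rw [htail]
  nlinarith

end

theorem stmt_16_general {Ω : Type*} [MeasurableSpace Ω] (μ : Measure Ω) [IsProbabilityMeasure μ]
    (V : Ω → ℝ) (hpos : ∀ᵐ ω ∂μ, 0 < V ω)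
    (hVint : Integrable V μ)
    (hlogint : Integrable (fun ω => Real.log (V ω)) μ)
    (δ : ℝ) (hδ0 : 0 < δ)
    (hgeo : Real.exp (∫ ω, Real.log (V ω) ∂μ) = (1 - δ) * ∫ ω, V ω ∂μ) :
    (1 - (2:ℝ) ^ ((4:ℝ)/3) * δ ^ ((1:ℝ)/3)) * (∫ ω, V ω ∂μ) ≤
      ⨆ p : {p : ℝ // 0 < p}, (p : ℝ) * (μ {ω | (p : ℝ) < V ω}).toReal := by
  have hcoef : (2:ℝ) ^ ((4:ℝ)/3) * δ ^ ((1:ℝ)/3) = 2 * (2 * δ) ^ ((1:ℝ)/3) := by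
    rw [mul_rpow (by norm_num) hδ0.le, show (4:ℝ)/3 = 1 + 1/3 by norm_num,
      rpow_add (by norm_num), rpow_one]
    ring
  rw [hcoef]
  set ε := (2 * δ) ^ ((1:ℝ)/3)
  have hε0 : 0 < ε := by positivity
  have hε3 : ε ^ 3 = 2 * δ := by
    rw [← rpow_natCast, ← rpow_mul (by positivity)]
    norm_num
  rcases lt_or_ge ε 1 with hε1 | hε1
  · exact one_sub_two_mul_integral_le_iSup hpos hVint hlogint hε0 hε1 (by rw [hε3, hgeo]; ring)
  · calc (1 - 2 * ε) * (∫ ω, V ω ∂μ) ≤ 0 :=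
          mul_nonpos_of_nonpos_of_nonneg (by linarith)
            (integral_nonneg_of_ae (hpos.mono fun _ h => h.le))
      _ ≤ _ := iSup_nonneg fun p => mul_nonneg p.2.le ENNReal.toReal_nonneg

/-- If `V` is positive with finite expectation and geometric expectation
`(1-δ)·E[V]`, `0 < δ < 1`, then `u(V) ≥ (1 - 2^{4/3}·δ^{1/3})·E[V]`. -/
theorem stmt_16 {Ω : Type*} [MeasurableSpace Ω] (μ : Measure Ω) [IsProbabilityMeasure μ]
    (V : Ω → ℝ) (hV : Measurable V) (hpos : ∀ᵐ ω ∂μ, 0 < V ω)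
    (hVint : Integrable V μ)
    (hlogint : Integrable (fun ω => Real.log (V ω)) μ)
    (δ : ℝ) (hδ0 : 0 < δ) (hδ1 : δ < 1)
    (hgeo : Real.exp (∫ ω, Real.log (V ω) ∂μ) = (1 - δ) * ∫ ω, V ω ∂μ) :
    (1 - (2:ℝ) ^ ((4:ℝ)/3) * δ ^ ((1:ℝ)/3)) * (∫ ω, V ω ∂μ) ≤
      ⨆ p : {p : ℝ // 0 < p}, (p : ℝ) * (μ {ω | (p : ℝ) < V ω}).toReal :=
  stmt_16_general μ V hpos hVint hlogint δ hδ0 hgeo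
end
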